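/- For every integer t ≥ 1 there exists a binary LCD [31t+26, 5, 16t+12] code, i.e., a 5-dimensional linear complementary dual subspace of F_2^(31t+26) with minimum weight 16t+12. -/

import Mathlib

/-- The (Hamming) weight of a vector over `F_2`. -/
def wt {n : ℕ} (x : Fin n → ZMod 2) : ℕ :=
  Finset.card (Finset.univ.filter fun i => x i ≠ 0)

/-- The dual code of a binary code `C`, with respect to the standard inner product. -/
def dualCode {n : ℕ} (C : Submodule (ZMod 2) (Fin n → ZMod 2)) :
    Submodule (ZMod 2) (Fin n → ZMod 2) where
  carrier := {x | ∀ y ∈ C, ∑ i, x i * y i = 0}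
  add_mem' := by
    intro a b ha hb y hy
    simp [Pi.add_apply, add_mul, Finset.sum_add_distrib, ha y hy, hb y hy]
  zero_mem' := by
    intro y hy
    simp
  smul_mem' := by
    intro c a ha y hy
    simp only [Pi.smul_apply, smul_eq_mul, mul_assoc, ← Finset.mul_sum, ha y hy, mul_zero]

/-- A binary code is linear complementary dual (LCD) if it meets its dual trivially. -/
def IsLCD {n : ℕ} (C : Submodule (ZMod 2) (Fin n → ZMod 2)) : Prop :=
  C ⊓ dualCode C = ⊥

/-- The minimum weight of a binary code: the smallest weight of a nonzero codeword. -/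
noncomputable def minWt {n : ℕ} (C : Submodule (ZMod 2) (Fin n → ZMod 2)) : ℕ :=
  sInf {w | ∃ x ∈ C, x ≠ 0 ∧ wt x = w}

/-- `dLCD n k` is the largest minimum weight among all binary LCD `[n,k]` codes. -/
noncomputable def dLCD (n k : ℕ) : ℕ :=
  sSup {d | ∃ C : Submodule (ZMod 2) (Fin n → ZMod 2),
    Module.finrank (ZMod 2) C = k ∧ IsLCD C ∧ minWt C = d}

/-!
Every nonzero codeword of the simplex code `S` (whose 31 columns are the nonzero vectors of
`F_2^5`) has weight 16, and `S Sᵀ = 0` since any two rows of `S` meet in 8 positions. Appending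
`t` copies of `S` to a generator `B` of an LCD `[26,5,12]` code therefore adds exactly `16t` to
the weight of every nonzero codeword, and the resulting generator `G` has Gram matrix
`G Gᵀ = B Bᵀ`. As `B Bᵀ` is nonsingular, `G` has full rank and generates an LCD code (Massey's
criterion).
-/

open Matrix

section
variable {ι ι' β : Type*} [Fintype ι] [Fintype ι'] [Zero β] [DecidableEq β]

theorem hammingNorm_eq_sum (x : ι → β) : hammingNorm x = ∑ i, if x i ≠ 0 then 1 else 0 :=
  Finset.card_filter _ _

theorem hammingNorm_comp_equiv (x : ι → β) (e : ι' ≃ ι) :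
    hammingNorm (x ∘ e) = hammingNorm x :=
  Finset.card_equiv e (by simp)

theorem hammingNorm_sumElim (x : ι → β) (y : ι' → β) :
    hammingNorm (Sum.elim x y) = hammingNorm x + hammingNorm y := by
  simp only [hammingNorm_eq_sum, Fintype.sum_sum_type, Sum.elim_inl, Sum.elim_inr]
  congr

theorem hammingNorm_comp_snd (t : ℕ) (x : ι → β) :
    hammingNorm (fun p : Fin t × ι => x p.2) = t * hammingNorm x := by
  have hsupp : ({p : Fin t × ι | x p.2 ≠ 0} : Finset _) =
      Finset.univ ×ˢ ({i | x i ≠ 0} : Finset ι) := by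
    ext; simp
  rw [hammingNorm, hsupp, Finset.card_product, Finset.card_univ, Fintype.card_fin, hammingNorm]
end

theorem wt_eq_hammingNorm {n : ℕ} (x : Fin n → ZMod 2) : wt x = hammingNorm x := rfl

section
variable {κ ι ι' R : Type*} [CommSemiring R]

def repeatCols (t : ℕ) (A : Matrix κ ι R) : Matrix κ (Fin t × ι) R :=
  of fun i p => A i p.2

theorem vecMul_repeatCols [Fintype κ] (t : ℕ) (A : Matrix κ ι R) (v : κ → R) :
    v ᵥ* repeatCols t A = fun p => (v ᵥ* A) p.2 := rfl

theorem vecMul_submatrix_id [Fintype κ] {n : Type*} (A : Matrix κ ι R) (f : n → ι)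
    (v : κ → R) : v ᵥ* A.submatrix id f = (v ᵥ* A) ∘ f := rfl

theorem repeatCols_mul_transpose [Fintype ι] (t : ℕ) (A : Matrix κ ι R) :
    repeatCols t A * (repeatCols t A)ᵀ = t • (A * Aᵀ) := by
  ext i k
  simp [mul_apply, repeatCols, Fintype.sum_prod_type]

theorem fromCols_mul_transpose [Fintype ι] [Fintype ι'] (A : Matrix κ ι R)
    (B : Matrix κ ι' R) : fromCols A B * (fromCols A B)ᵀ = A * Aᵀ + B * Bᵀ := by
  rw [transpose_fromCols, fromCols_mul_fromRows]

theorem submatrix_id_mul_transpose [Fintype ι] {n : Type*} [Fintype n] (A : Matrix κ ι R)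
    (e : n ≃ ι) : A.submatrix id e * (A.submatrix id e)ᵀ = A * Aᵀ := by
  simp [transpose_submatrix]
end

section
variable {κ : Type*} [Fintype κ] [DecidableEq κ]

theorem vecMul_injective_of_isUnit_mul_transpose {K ι : Type*} [Field K] [Fintype ι]
    {G : Matrix κ ι K} (hG : IsUnit (G * Gᵀ)) : Function.Injective G.vecMul := fun m m' h =>
  vecMul_injective_iff_isUnit.mpr hG (by simp only [← vecMul_vecMul, h])

variable {n : ℕ} {G : Matrix κ (Fin n) (ZMod 2)}

theorem finrank_range_vecMulLinear (hG : IsUnit (G * Gᵀ)) :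
    Module.finrank (ZMod 2) (LinearMap.range G.vecMulLinear) = Fintype.card κ := by
  rw [LinearMap.finrank_range_of_inj (vecMul_injective_of_isUnit_mul_transpose hG),
    Module.finrank_fintype_fun_eq_card]

theorem isLCD_range_vecMulLinear (hG : IsUnit (G * Gᵀ)) :
    IsLCD (LinearMap.range G.vecMulLinear) := by
  rw [IsLCD, eq_bot_iff]
  rintro _ ⟨⟨m, rfl⟩, hdual⟩
  have hgram : m ᵥ* (G * Gᵀ) = 0 := by
    ext k
    have hrow : G.row k ∈ LinearMap.range G.vecMulLinear :=
      ⟨Pi.single k 1, single_one_vecMul k G⟩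
    simpa [← vecMul_vecMul, vecMul_transpose, mulVec, dotProduct, mul_comm] using hdual _ hrow
  have hm : m = 0 := vecMul_injective_iff_isUnit.mpr hG (hgram.trans (zero_vecMul _).symm)
  simp [hm]
end

theorem minWt_eq_of_le_of_exists {n : ℕ} {C : Submodule (ZMod 2) (Fin n → ZMod 2)} {d : ℕ}
    (hle : ∀ x ∈ C, x ≠ 0 → d ≤ wt x) (hex : ∃ x ∈ C, x ≠ 0 ∧ wt x = d) :
    minWt C = d :=
  IsLeast.csInf_eq ⟨hex, by rintro _ ⟨x, hx, hx0, rfl⟩; exact hle x hx hx0⟩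

def simplexGen : Matrix (Fin 5) (Fin 31) (ZMod 2) :=
  of fun i j => if Nat.testBit ((j : ℕ) + 1) i then 1 else 0

def lcdGen26 : Matrix (Fin 5) (Fin 26) (ZMod 2) :=
  of fun i j => if Nat.testBit
    (![15, 26, 27, 8, 18, 24, 7, 11, 22, 17, 20, 3, 13, 5, 9, 1, 23, 30, 16, 4, 10, 2, 26, 6, 28,
      31] j) i then 1 else 0

theorem simplexGen_mul_transpose : simplexGen * simplexGenᵀ = 0 := by decide

theorem hammingNorm_vecMul_simplexGen :
    ∀ m : Fin 5 → ZMod 2, m ≠ 0 → hammingNorm (m ᵥ* simplexGen) = 16 := by decide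

theorem le_hammingNorm_vecMul_lcdGen26 :
    ∀ m : Fin 5 → ZMod 2, m ≠ 0 → 12 ≤ hammingNorm (m ᵥ* lcdGen26) := by decide

theorem exists_hammingNorm_vecMul_lcdGen26_eq :
    ∃ m : Fin 5 → ZMod 2, m ≠ 0 ∧ hammingNorm (m ᵥ* lcdGen26) = 12 := by decide

set_option maxRecDepth 100000 in
theorem det_lcdGen26_mul_transpose : (lcdGen26 * lcdGen26ᵀ).det = 1 := by decide

noncomputable def lcdGenColEquiv (t : ℕ) : (Fin t × Fin 31) ⊕ Fin 26 ≃ Fin (31 * t + 26) :=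
  Fintype.equivFinOfCardEq (by simp [mul_comm])

noncomputable def lcdGen (t : ℕ) : Matrix (Fin 5) (Fin (31 * t + 26)) (ZMod 2) :=
  (fromCols (repeatCols t simplexGen) lcdGen26).submatrix id (lcdGenColEquiv t).symm

theorem isUnit_lcdGen_mul_transpose (t : ℕ) : IsUnit (lcdGen t * (lcdGen t)ᵀ) := by
  rw [lcdGen, submatrix_id_mul_transpose, fromCols_mul_transpose, repeatCols_mul_transpose,
    simplexGen_mul_transpose, smul_zero, zero_add, isUnit_iff_isUnit_det,
    det_lcdGen26_mul_transpose]
  exact isUnit_one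

theorem wt_vecMul_lcdGen (t : ℕ) {m : Fin 5 → ZMod 2} (hm : m ≠ 0) :
    wt (m ᵥ* lcdGen t) = 16 * t + hammingNorm (m ᵥ* lcdGen26) := by
  rw [wt_eq_hammingNorm, lcdGen, vecMul_submatrix_id, hammingNorm_comp_equiv, vecMul_fromCols,
    hammingNorm_sumElim, vecMul_repeatCols, hammingNorm_comp_snd,
    hammingNorm_vecMul_simplexGen m hm, mul_comm]

theorem exists_lcd_31t26_general (t : ℕ) :
    ∃ C : Submodule (ZMod 2) (Fin (31 * t + 26) → ZMod 2),
      Module.finrank (ZMod 2) C = 5 ∧ IsLCD C ∧ minWt C = 16 * t + 12 := by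
  have hG := isUnit_lcdGen_mul_transpose t
  refine ⟨LinearMap.range (lcdGen t).vecMulLinear, by simpa using finrank_range_vecMulLinear hG,
    isLCD_range_vecMulLinear hG, minWt_eq_of_le_of_exists ?_ ?_⟩
  · rintro _ ⟨m, rfl⟩ hx
    have hm : m ≠ 0 := by rintro rfl; simp at hx
    rw [vecMulLinear_apply, wt_vecMul_lcdGen t hm]
    have := le_hammingNorm_vecMul_lcdGen26 m hm
    omega
  · obtain ⟨m, hm, hw⟩ := exists_hammingNorm_vecMul_lcdGen26_eq
    have hcw : m ᵥ* lcdGen t ≠ 0 := fun h =>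
      hm (vecMul_injective_of_isUnit_mul_transpose hG (h.trans (zero_vecMul _).symm))
    exact ⟨_, ⟨m, rfl⟩, hcw, by rw [vecMulLinear_apply, wt_vecMul_lcdGen t hm, hw]⟩

theorem exists_lcd_31t26 (t : ℕ) (ht : 1 ≤ t) :
    ∃ C : Submodule (ZMod 2) (Fin (31 * t + 26) → ZMod 2),
      Module.finrank (ZMod 2) C = 5 ∧ IsLCD C ∧ minWt C = 16 * t + 12 :=
  exists_lcd_31t26_general t
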